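/- arXiv:1510.05549 — 7 statements merged into one kernel-verified Lean document; each statement's English description precedes it below -/
import Mathlib

section
/- Let D be a derivation of the free Lie algebra Lie[a,b] such that D([a,b]) = 0. Then D(a) is a push-invariant polynomial. -/
attribute [local instance 100] LieRing.ofAssociativeRing

/-- The free Lie algebra Lie[a,b] on two generators over ℚ. -/
abbrev L := FreeLieAlgebra ℚ (Fin 2)
/-- The free associative algebra ℚ⟨a,b⟩. -/
abbrev FA := FreeAlgebra ℚ (Fin 2)
/-- The generator a. -/
noncomputable def la : L := FreeLieAlgebra.of ℚ 0
/-- The generator b. -/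
noncomputable def lb : L := FreeLieAlgebra.of ℚ 1
/-- The canonical embedding of Lie[a,b] into ℚ⟨a,b⟩ (with commutator bracket). -/
noncomputable def theta : L →ₗ⁅ℚ⁆ FA := FreeLieAlgebra.lift ℚ (FreeAlgebra.ι ℚ)
/-- The coefficient of the word w (a = 0, b = 1) in a noncommutative polynomial. -/
noncomputable def coeffOf (p : FA) (w : List (Fin 2)) : ℚ :=
  (FreeAlgebra.equivMonoidAlgebraFreeMonoid (R := ℚ) p).coeff (FreeMonoid.ofList w)

/-- push on words: push(a^{i₀} b ⋯ a^{i_{r-1}} b a^{i_r}) = a^{i_r} b a^{i₀} b ⋯ b a^{i_{r-1}};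
words containing no b are fixed. -/
def pushWord (w : List (Fin 2)) : List (Fin 2) :=
  let T := (w.reverse.takeWhile (fun x => x = 0)).reverse
  let S := w.take (w.length - T.length)
  if S = [] then w else T ++ [(1 : Fin 2)] ++ S.dropLast

/-- The linear operator push on ℚ⟨a,b⟩, defined on monomials by `pushWord`. -/
noncomputable def pushA (p : FA) : FA :=
  (FreeAlgebra.equivMonoidAlgebraFreeMonoid (R := ℚ) (X := Fin 2)).symm
    (MonoidAlgebra.ofCoeff (Finsupp.mapDomain (fun m => FreeMonoid.ofList (pushWord m.toList))
      (FreeAlgebra.equivMonoidAlgebraFreeMonoid (R := ℚ) p).coeff))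

/-!
Write `p = θ(D a)` and `q = θ(D b)`. Since `D` kills `[a, b]`, we have `[p, b] = [q, a]` in
`ℚ⟨a,b⟩`. Comparing the coefficients `c_p`, `c_q` of both sides at words `x v y` with letters
`x, y` gives `c_p(a v) = -c_q(v b)`, `c_p(b v) = c_p(v b)`, `c_p(v a) = -c_q(b v)` and
`c_q(v a) = c_q(a v)`. The last relation moves a block `a^k` from the front of a word to its back
in `c_q`, and with the other three this yields `c_p(a^k b S) = c_p(S b a^k)`, which is exactly
`push`-invariance of `p`.
-/

open List FreeAlgebra

lemma pushWord_replicate (k : ℕ) : pushWord (replicate k (0 : Fin 2)) = replicate k 0 := by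
  simp [pushWord]

lemma pushWord_append_one_cons_replicate (S : List (Fin 2)) (k : ℕ) :
    pushWord (S ++ 1 :: replicate k 0) = replicate k 0 ++ 1 :: S := by
  have hT : ((S ++ 1 :: replicate k (0 : Fin 2)).reverse.takeWhile (· = 0)).reverse =
      replicate k 0 := by
    simp
  have hS : (S ++ 1 :: replicate k (0 : Fin 2)).take (S ++ [1]).length = S ++ [1] := by
    simp [take_append]
  simp only [pushWord, hT, length_replicate, length_append, length_cons]
  rw [show S.length + (k + 1) - k = (S ++ [1]).length by simp; omega, hS]
  simp

lemma eq_replicate_or_eq_replicate_append_one_cons (w : List (Fin 2)) :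
    (∃ k, w = replicate k 0) ∨ ∃ k S, w = replicate k 0 ++ 1 :: S := by
  induction w with
  | nil => exact .inl ⟨0, rfl⟩
  | cons x w ih =>
    match x, ih with
    | 0, .inl ⟨k, hk⟩ => exact .inl ⟨k + 1, by simp [hk, replicate_succ]⟩
    | 0, .inr ⟨k, S, hk⟩ => exact .inr ⟨k + 1, S, by simp [hk, replicate_succ]⟩
    | 1, _ => exact .inr ⟨0, w, rfl⟩

lemma eq_replicate_or_eq_append_one_cons_replicate (w : List (Fin 2)) :
    (∃ k, w = replicate k 0) ∨ ∃ S k, w = S ++ 1 :: replicate k 0 := by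
  rcases eq_replicate_or_eq_replicate_append_one_cons w.reverse with ⟨k, hk⟩ | ⟨k, S, hk⟩
  · exact .inl ⟨k, by simpa using congrArg reverse hk⟩
  · exact .inr ⟨S.reverse, k, by simpa using congrArg reverse hk⟩

def pushWordEquiv : List (Fin 2) ≃ List (Fin 2) where
  toFun := pushWord
  invFun w := (pushWord w.reverse).reverse
  left_inv w := by
    rcases eq_replicate_or_eq_append_one_cons_replicate w with ⟨k, rfl⟩ | ⟨S, k, rfl⟩
    · simp [pushWord_replicate]
    · simp [pushWord_append_one_cons_replicate]
  right_inv w := by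
    rcases eq_replicate_or_eq_replicate_append_one_cons w with ⟨k, rfl⟩ | ⟨k, S, rfl⟩
    · simp [pushWord_replicate]
    · simp [pushWord_append_one_cons_replicate]

lemma pushA_eq_self_of_coeffOf_pushWord {p : FA}
    (h : ∀ w, coeffOf p (pushWord w) = coeffOf p w) : pushA p = p := by
  let e := FreeMonoid.toList.trans (pushWordEquiv.trans (FreeMonoid.ofList (α := Fin 2)))
  have he : Finsupp.equivMapDomain e (equivMonoidAlgebraFreeMonoid p).coeff =
      (equivMonoidAlgebraFreeMonoid p).coeff := by
    ext u
    have hu := h (pushWordEquiv.symm u.toList)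
    rw [show pushWord (pushWordEquiv.symm u.toList) = u.toList from
      pushWordEquiv.apply_symm_apply _] at hu
    simpa [e, coeffOf] using hu.symm
  show equivMonoidAlgebraFreeMonoid.symm (MonoidAlgebra.ofCoeff (Finsupp.mapDomain e _)) = p
  rw [← Finsupp.equivMapDomain_eq_mapDomain, he, MonoidAlgebra.ofCoeff_coeff,
    AlgEquiv.symm_apply_apply]

lemma coeffOf_sub (x y : FA) (w : List (Fin 2)) :
    coeffOf (x - y) w = coeffOf x w - coeffOf y w := by
  simp [coeffOf]

lemma equivMonoidAlgebraFreeMonoid_ι {R X : Type*} [CommSemiring R] (i : X) :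
    equivMonoidAlgebraFreeMonoid (ι R i) = MonoidAlgebra.single (FreeMonoid.of i) 1 := by
  simp [equivMonoidAlgebraFreeMonoid]

lemma coeffOf_mul_ι_append (x : FA) (i j : Fin 2) (w : List (Fin 2)) :
    coeffOf (x * ι ℚ i) (w ++ [j]) = if j = i then coeffOf x w else 0 := by
  rw [coeffOf, coeffOf, map_mul, equivMonoidAlgebraFreeMonoid_ι, FreeMonoid.ofList_append,
    FreeMonoid.ofList_singleton]
  split_ifs with hji
  · rw [hji, MonoidAlgebra.coeff_mul_single_mul, mul_one]
  · refine MonoidAlgebra.coeff_mul_single_of_forall_mul_ne _ _ fun d hd => hji ?_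
    obtain ⟨-, hij⟩ : d.toList = w ∧ i = j := by simpa using congrArg FreeMonoid.toList hd
    exact hij.symm

lemma coeffOf_ι_mul_cons (x : FA) (i j : Fin 2) (w : List (Fin 2)) :
    coeffOf (ι ℚ i * x) (j :: w) = if j = i then coeffOf x w else 0 := by
  rw [coeffOf, coeffOf, map_mul, equivMonoidAlgebraFreeMonoid_ι, FreeMonoid.ofList_cons]
  split_ifs with hji
  · rw [hji, MonoidAlgebra.coeff_single_mul_mul, one_mul]
  · refine MonoidAlgebra.coeff_single_mul_of_forall_mul_ne _ _ fun d hd => hji ?_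
    obtain ⟨hij, -⟩ : i = j ∧ d.toList = w := by simpa using congrArg FreeMonoid.toList hd
    exact hij.symm

section LieEq

variable {p q : FA}

lemma coeffOf_cons_append_of_lie_eq (h : ⁅p, ι ℚ (1 : Fin 2)⁆ = ⁅q, ι ℚ (0 : Fin 2)⁆)
    (x y : Fin 2) (v : List (Fin 2)) :
    ((if y = 1 then coeffOf p (x :: v) else 0) - if x = 1 then coeffOf p (v ++ [y]) else 0) =
      (if y = 0 then coeffOf q (x :: v) else 0) - if x = 0 then coeffOf q (v ++ [y]) else 0 := by
  have hc := congrArg (coeffOf · ((x :: v) ++ [y])) h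
  simp only [Ring.lie_def, coeffOf_sub, coeffOf_mul_ι_append] at hc
  simpa only [cons_append, coeffOf_ι_mul_cons] using hc

lemma coeffOf_zero_cons_eq_neg (h : ⁅p, ι ℚ (1 : Fin 2)⁆ = ⁅q, ι ℚ (0 : Fin 2)⁆)
    (v : List (Fin 2)) :
    coeffOf p (0 :: v) = -coeffOf q (v ++ [1]) := by
  simpa using coeffOf_cons_append_of_lie_eq h 0 1 v

lemma coeffOf_one_cons_eq (h : ⁅p, ι ℚ (1 : Fin 2)⁆ = ⁅q, ι ℚ (0 : Fin 2)⁆)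
    (v : List (Fin 2)) :
    coeffOf p (1 :: v) = coeffOf p (v ++ [1]) := by
  simpa [sub_eq_zero] using coeffOf_cons_append_of_lie_eq h 1 1 v

lemma coeffOf_append_zero_eq_neg (h : ⁅p, ι ℚ (1 : Fin 2)⁆ = ⁅q, ι ℚ (0 : Fin 2)⁆)
    (v : List (Fin 2)) :
    coeffOf p (v ++ [0]) = -coeffOf q (1 :: v) := by
  simpa [neg_eq_iff_eq_neg] using coeffOf_cons_append_of_lie_eq h 1 0 v

lemma coeffOf_append_zero_eq_zero_cons (h : ⁅p, ι ℚ (1 : Fin 2)⁆ = ⁅q, ι ℚ (0 : Fin 2)⁆)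
    (v : List (Fin 2)) :
    coeffOf q (v ++ [0]) = coeffOf q (0 :: v) := by
  simpa [eq_sub_iff_add_eq] using coeffOf_cons_append_of_lie_eq h 0 0 v

lemma coeffOf_replicate_append_eq (h : ⁅p, ι ℚ (1 : Fin 2)⁆ = ⁅q, ι ℚ (0 : Fin 2)⁆) (k : ℕ)
    (v : List (Fin 2)) : coeffOf q (replicate k 0 ++ v) = coeffOf q (v ++ replicate k 0) := by
  induction k generalizing v with
  | zero => simp
  | succ k ih =>
    calc coeffOf q (replicate (k + 1) 0 ++ v)
        = coeffOf q (0 :: (replicate k 0 ++ v)) := by rw [replicate_succ, cons_append]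
      _ = coeffOf q (replicate k 0 ++ (v ++ [0])) := by
        rw [← coeffOf_append_zero_eq_zero_cons h, append_assoc]
      _ = coeffOf q (v ++ replicate (k + 1) 0) := by
        rw [ih, append_assoc, singleton_append, ← replicate_succ]

lemma coeffOf_replicate_append_one_cons (h : ⁅p, ι ℚ (1 : Fin 2)⁆ = ⁅q, ι ℚ (0 : Fin 2)⁆)
    (k : ℕ) (S : List (Fin 2)) :
    coeffOf p (replicate k 0 ++ 1 :: S) = coeffOf p (S ++ 1 :: replicate k 0) := by
  cases k with
  | zero => simpa using coeffOf_one_cons_eq h S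
  | succ k =>
    calc coeffOf p (replicate (k + 1) 0 ++ 1 :: S)
        = -coeffOf q (replicate k 0 ++ (1 :: S ++ [1])) := by
          rw [replicate_succ, cons_append, coeffOf_zero_cons_eq_neg h, append_assoc]
      _ = -coeffOf q (1 :: (S ++ 1 :: replicate k 0)) := by
          rw [coeffOf_replicate_append_eq h]; simp
      _ = coeffOf p (S ++ 1 :: replicate (k + 1) 0) := by
          rw [← coeffOf_append_zero_eq_neg h, replicate_succ']; simp

lemma coeffOf_pushWord_of_lie_eq (h : ⁅p, ι ℚ (1 : Fin 2)⁆ = ⁅q, ι ℚ (0 : Fin 2)⁆)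
    (w : List (Fin 2)) : coeffOf p (pushWord w) = coeffOf p w := by
  rcases eq_replicate_or_eq_append_one_cons_replicate w with ⟨k, rfl⟩ | ⟨S, k, rfl⟩
  · rw [pushWord_replicate]
  · rw [pushWord_append_one_cons_replicate, coeffOf_replicate_append_one_cons h]

theorem pushA_eq_self_of_lie_eq (h : ⁅p, ι ℚ (1 : Fin 2)⁆ = ⁅q, ι ℚ (0 : Fin 2)⁆) :
    pushA p = p :=
  pushA_eq_self_of_coeffOf_pushWord (coeffOf_pushWord_of_lie_eq h)

end LieEq

/-- If D is a derivation of Lie[a,b] with D([a,b]) = 0, then D(a) is a push-invariant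
polynomial. -/
theorem derivation_killing_ab_push_invariant (D : LieDerivation ℚ L L)
    (hD : D ⁅la, lb⁆ = 0) :
    pushA (theta (D la)) = theta (D la) := by
  have hla : theta la = ι ℚ 0 := FreeLieAlgebra.lift_of_apply _ _
  have hlb : theta lb = ι ℚ 1 := FreeLieAlgebra.lift_of_apply _ _
  have hθ := congrArg theta hD
  rw [D.apply_lie_eq_add, map_add, LieHom.map_lie, LieHom.map_lie, map_zero, hla, hlb,
    ← lie_skew, neg_add_eq_zero] at hθ
  exact pushA_eq_self_of_lie_eq hθ.symm
end

section
/- Every derivation ε_{2i} (i ≥ 0) of Lie[a,b] annihilates the bracket [a,b]: ε_{2i}([a,b]) = 0. -/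
attribute [local instance] LieRing.ofAssociativeRing

/-- ε_{2i}(a) = ad(a)^{2i}(b). -/
noncomputable def epsA (i : ℕ) : L := ((LieAlgebra.ad ℚ L la) ^ (2 * i)) lb

/-- ε_{2i}(b) = Σ_{j=0}^{i-1} (-1)^j [ad(a)^j(b), ad(a)^{2i-1-j}(b)]. -/
noncomputable def epsB (i : ℕ) : L :=
  ∑ j ∈ Finset.range i, ((-1 : ℚ) ^ j) •
    ⁅((LieAlgebra.ad ℚ L la) ^ j) lb, ((LieAlgebra.ad ℚ L la) ^ (2 * i - 1 - j)) lb⁆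

/-!
Write `x j = ad(a)^j (b)`. By the Leibniz rule, `ad a` sends the `j`-th summand of `ε_{2i}(b)` to
`f j - f (j + 1)` with `f j = (-1)^j [x j, x (2i - j)]`, so `[a, ε_{2i}(b)]` telescopes to
`f 0 - f i = [b, x (2i)]`, since `f i = ± [x i, x i] = 0`. This cancels `[ε_{2i}(a), b] = [x (2i), b]`.
-/

open Finset LieAlgebra

section
variable {R L : Type*} [CommRing R] [LieRing L] [LieAlgebra R L]

lemma lie_ad_pow_lie_ad_pow (a y z : L) (j k : ℕ) :
    ⁅a, ⁅(ad R L a ^ j) y, (ad R L a ^ k) z⁆⁆ =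
      ⁅(ad R L a ^ (j + 1)) y, (ad R L a ^ k) z⁆ + ⁅(ad R L a ^ j) y, (ad R L a ^ (k + 1)) z⁆ := by
  simp only [pow_succ', Module.End.mul_apply, ad_apply]
  exact leibniz_lie _ _ _

lemma lie_sum_neg_one_pow_smul_lie_ad_pow (a b : L) (n : ℕ) :
    ⁅a, ∑ j ∈ range n, (-1 : R) ^ j • ⁅(ad R L a ^ j) b, (ad R L a ^ (2 * n - 1 - j)) b⁆⁆ =
      ⁅b, (ad R L a ^ (2 * n)) b⁆ := by
  set f : ℕ → L := fun j ↦ (-1 : R) ^ j • ⁅(ad R L a ^ j) b, (ad R L a ^ (2 * n - j)) b⁆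
  have summand_eq (j : ℕ) (hj : j < n) :
      ⁅a, (-1 : R) ^ j • ⁅(ad R L a ^ j) b, (ad R L a ^ (2 * n - 1 - j)) b⁆⁆ = f j - f (j + 1) := by
    have h₁ : 2 * n - 1 - j + 1 = 2 * n - j := by omega
    have h₂ : 2 * n - (j + 1) = 2 * n - 1 - j := by omega
    rw [lie_smul, lie_ad_pow_lie_ad_pow, h₁]
    simp only [f, h₂, pow_succ, mul_neg_one, neg_smul, sub_neg_eq_add, smul_add, add_comm]
  have f_last : f n = 0 := by
    simp only [f, show 2 * n - n = n by omega, lie_self, smul_zero]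
  rw [lie_sum, sum_congr rfl fun j hj ↦ summand_eq j (mem_range.mp hj), sum_range_sub', f_last,
    sub_zero]
  simp only [f, pow_zero, one_smul, Module.End.one_apply, Nat.sub_zero]

end

/-- Every derivation ε_{2i} annihilates [a,b]. -/
theorem eps2i_kills_ab (i : ℕ) (D : LieDerivation ℚ L L)
    (ha : D la = epsA i) (hb : D lb = epsB i) :
    D ⁅la, lb⁆ = 0 := by
  rw [D.apply_lie_eq_add, ha, hb, epsA, epsB, lie_sum_neg_one_pow_smul_lie_ad_pow,
    ← lie_skew lb, neg_add_cancel]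
end

section
/- The Poisson bracket {P,Q} = [P,Q] + D_P(Q) - D_Q(P) on Lie[a,b] satisfies [D_P, D_Q] = D_{{P,Q}} for all P, Q ∈ Lie[a,b], where D_P is the derivation with D_P(a) = 0 and D_P(b) = [b,P]. In particular, the Poisson bracket is a Lie bracket on the underlying vector space of Lie[a,b]. -/
attribute [local instance 100] LieRing.ofAssociativeRing

/-!
Both sides of `⁅D P, D Q⁆ = D {P, Q}` are derivations, and the generators span the free Lie
algebra, so it suffices to compare them on `a` and `b`. On `a` both vanish; on `b` the identity
is the Jacobi identity for `b, P, Q`. Once `P ↦ D P` turns `{·,·}` into the commutator of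
derivations, the Jacobi identity for `{·,·}` is a direct expansion.
-/

theorem FreeLieAlgebra.lieSpan_range_of (R X : Type*) [CommRing R] :
    LieSubalgebra.lieSpan R (FreeLieAlgebra R X) (Set.range (FreeLieAlgebra.of R)) = ⊤ := by
  set S := LieSubalgebra.lieSpan R (FreeLieAlgebra R X) (Set.range (FreeLieAlgebra.of R))
  let f : FreeLieAlgebra R X →ₗ⁅R⁆ S :=
    FreeLieAlgebra.lift R fun x => ⟨FreeLieAlgebra.of R x, LieSubalgebra.subset_lieSpan ⟨x, rfl⟩⟩
  have hf : S.incl.comp f = LieHom.id :=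
    FreeLieAlgebra.hom_ext fun x => by simp [f, FreeLieAlgebra.lift_of_apply]
  refine eq_top_iff.2 fun z _ => ?_
  have hz : S.incl (f z) = z := LieHom.congr_fun hf z
  exact hz ▸ (f z).2

namespace LieDerivation

variable {R L : Type*} [CommRing R] [LieRing L] [LieAlgebra R L]

def poissonBracket (D : L → LieDerivation R L L) (P Q : L) : L :=
  ⁅P, Q⁆ + D P Q - D Q P

variable (D : L → LieDerivation R L L)

theorem poissonBracket_swap (P Q : L) : poissonBracket D Q P = -poissonBracket D P Q := by
  rw [poissonBracket, poissonBracket, ← lie_skew P Q]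
  abel

theorem commutator_apply_eq_poissonBracket_apply_of_apply_eq_zero {a : L}
    (ha : ∀ P, D P a = 0) (P Q : L) :
    ⁅D P, D Q⁆ a = D (poissonBracket D P Q) a := by
  rw [commutator_apply, ha, ha, ha, map_zero, map_zero, sub_zero]

theorem commutator_apply_eq_poissonBracket_apply_of_apply_eq_lie {b : L}
    (hb : ∀ P, D P b = ⁅b, P⁆) (P Q : L) :
    ⁅D P, D Q⁆ b = D (poissonBracket D P Q) b := by
  rw [commutator_apply, hb, hb, hb, apply_lie_eq_add, apply_lie_eq_add, hb, hb, poissonBracket,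
    lie_sub, lie_add, leibniz_lie b P Q, ← lie_skew ⁅b, Q⁆ P]
  abel

theorem poissonBracket_leibniz (hD : ∀ P Q, ⁅D P, D Q⁆ = D (poissonBracket D P Q))
    (P Q W : L) :
    poissonBracket D P (poissonBracket D Q W) =
      poissonBracket D (poissonBracket D P Q) W + poissonBracket D Q (poissonBracket D P W) := by
  have hD' : ∀ S T X, D (⁅S, T⁆ + D S T - D T S) X = D S (D T X) - D T (D S X) :=
    fun S T X => by rw [← commutator_apply]; exact congr_fun (hD S T).symm X
  simp only [poissonBracket, map_add, map_sub, hD', apply_lie_eq_add, lie_add, add_lie, lie_sub,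
    sub_lie]
  rw [leibniz_lie P Q W, ← lie_skew (D W P) Q]
  abel

end LieDerivation

open LieDerivation in
/-- The Poisson bracket {P,Q} = [P,Q] + D_P(Q) - D_Q(P), where D_P is the derivation with
D_P(a) = 0 and D_P(b) = [b,P], satisfies [D_P, D_Q] = D_{{P,Q}}; in particular it is
antisymmetric and satisfies the (Leibniz form of the) Jacobi identity. -/
theorem poisson_bracket_props (Dmap : L → LieDerivation ℚ L L)
    (hA : ∀ P : L, Dmap P la = 0) (hB : ∀ P : L, Dmap P lb = ⁅lb, P⁆) :
    (∀ P Q : L, ⁅Dmap P, Dmap Q⁆ = Dmap (⁅P, Q⁆ + Dmap P Q - Dmap Q P)) ∧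
    (∀ P Q : L, (⁅P, Q⁆ + Dmap P Q - Dmap Q P) = -(⁅Q, P⁆ + Dmap Q P - Dmap P Q)) ∧
    (∀ P Q R : L,
      let pb : L → L → L := fun S T => ⁅S, T⁆ + Dmap S T - Dmap T S
      pb P (pb Q R) = pb (pb P Q) R + pb Q (pb P R)) := by
  have hcomm : ∀ P Q, ⁅Dmap P, Dmap Q⁆ = Dmap (poissonBracket Dmap P Q) := fun P Q =>
    ext_of_lieSpan_eq_top _ (FreeLieAlgebra.lieSpan_range_of ℚ (Fin 2)) <| by
      rintro _ ⟨x, rfl⟩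
      fin_cases x
      · exact commutator_apply_eq_poissonBracket_apply_of_apply_eq_zero Dmap hA P Q
      · exact commutator_apply_eq_poissonBracket_apply_of_apply_eq_lie Dmap hB P Q
  exact ⟨hcomm, fun P Q => poissonBracket_swap Dmap Q P, poissonBracket_leibniz Dmap hcomm⟩
end

section
/- For Lie polynomials F, G in ℚ⟨a,b⟩ that lie in the subalgebra generated by C_i = ad(a)^{i-1}(b), the map ma satisfies ma(FG) = μ(ma(F), ma(G)), i.e. ma transforms the associative product into the mould product μ. -/
/-- A mould over ℚ: its depth-r component is its restriction to lists of length r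
(a function of r commuting variables, identified with the corresponding ℚ-valued function). -/
abbrev Mould := List ℚ → ℚ

/-- The concatenation product of moulds:
μ(A,B)(u₁,…,u_r) = Σ_{i=0}^r A(u₁,…,u_i)·B(u_{i+1},…,u_r). -/
def muM (A B : Mould) : Mould := fun w =>
  ∑ i ∈ Finset.range (w.length + 1), A (w.take i) * B (w.drop i)

/-- lu(A,B) = μ(A,B) - μ(B,A). -/
def luM (A B : Mould) : Mould := fun w => muM A B w - muM B A w

/-- The free associative algebra ℚ⟨C₁,C₂,…⟩, the letter n standing for C_{n+1} = ad(a)^n(b). -/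
abbrev FC := FreeAlgebra ℚ ℕ

/-- The value of ma on the monomial C_{i₁}⋯C_{i_r} (letters n_k = i_k - 1):
ma(C_{i₁}⋯C_{i_r}) = (-1)^{i₁+⋯+i_r-r} u₁^{i₁-1}⋯u_r^{i_r-1}. -/
def maW (ws : List ℕ) : Mould := fun w =>
  if ws.length = w.length then
    ((-1 : ℚ) ^ ws.sum) * (List.zipWith (fun (u : ℚ) (n : ℕ) => u ^ n) w ws).prod
  else 0

/-- The linear map ma from ℚ⟨C₁,C₂,…⟩ to moulds. -/
noncomputable def maF (x : FC) : Mould := fun w =>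
  (FreeAlgebra.equivMonoidAlgebraFreeMonoid (R := ℚ) x).coeff.sum
    (fun ws c => c * maW ws.toList w)

/-- The coefficient of the word ws in an element of ℚ⟨C₁,C₂,…⟩. -/
noncomputable def coeffC (x : FC) (ws : List ℕ) : ℚ :=
  (FreeAlgebra.equivMonoidAlgebraFreeMonoid (R := ℚ) x).coeff (FreeMonoid.ofList ws)

attribute [local instance 100] LieRing.ofAssociativeRing

/-- The Lie subalgebra Lie[C₁,C₂,…] ⊂ ℚ⟨C₁,C₂,…⟩. -/
noncomputable def lieC : LieSubalgebra ℚ FC :=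
  LieSubalgebra.lieSpan ℚ FC (Set.range (FreeAlgebra.ι ℚ))

/-! `ma` sends a word of length `r` to a mould concentrated in depth `r`, so in
`μ(ma a, ma b)` only the split of `u` after its first `|a|` entries survives, and it reproduces
`ma (a ++ b)` because the sign and the monomial are multiplicative under concatenation. Since `ma`
is linear and `μ` bilinear, this multiplicativity on words extends to all of `ℚ⟨C₁,C₂,…⟩`. -/

lemma maW_eq_zero_of_length_ne {ws : List ℕ} {w : List ℚ} (h : ws.length ≠ w.length) :
    maW ws w = 0 :=
  if_neg h

lemma maW_append_append (a b : List ℕ) (u v : List ℚ) (h : a.length = u.length) :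
    maW (a ++ b) (u ++ v) = maW a u * maW b v := by
  by_cases hb : b.length = v.length
  · simp only [maW, List.length_append, h, hb, if_true, List.zipWith_append h.symm,
      List.prod_append, List.sum_append, pow_add]
    ring
  · rw [maW_eq_zero_of_length_ne (by simp only [List.length_append]; omega),
      maW_eq_zero_of_length_ne hb, mul_zero]

lemma maW_append (a b : List ℕ) : maW (a ++ b) = muM (maW a) (maW b) := by
  funext w
  by_cases h : a.length ≤ w.length
  · rw [muM, Finset.sum_eq_single_of_mem a.length (Finset.mem_range.2 (by omega))]
    · conv_lhs => rw [← List.take_append_drop a.length w]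
      exact maW_append_append _ _ _ _ (List.length_take_of_le h).symm
    · intro i hi hne
      rw [Finset.mem_range] at hi
      rw [maW_eq_zero_of_length_ne (by simp only [List.length_take]; omega), zero_mul]
  · rw [maW_eq_zero_of_length_ne (by simp only [List.length_append]; omega)]
    refine (Finset.sum_eq_zero fun i hi => ?_).symm
    rw [Finset.mem_range] at hi
    rw [maW_eq_zero_of_length_ne (by simp only [List.length_take]; omega), zero_mul]

noncomputable def muBilin : Mould →ₗ[ℚ] Mould →ₗ[ℚ] Mould :=
  LinearMap.mk₂ ℚ muM
    (fun A A' B => by funext w; simp [muM, add_mul, Finset.sum_add_distrib])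
    (fun r A B => by funext w; simp [muM, Finset.mul_sum, mul_assoc])
    (fun A B B' => by funext w; simp [muM, mul_add, Finset.sum_add_distrib])
    (fun r A B => by funext w; simp [muM, Finset.mul_sum, mul_left_comm])

noncomputable def maMonoidAlgebra : MonoidAlgebra ℚ (FreeMonoid ℕ) →ₗ[ℚ] Mould :=
  Finsupp.linearCombination ℚ (fun ws => maW ws.toList) ∘ₗ
    (MonoidAlgebra.coeffLinearEquiv ℚ).toLinearMap

lemma maF_eq_maMonoidAlgebra (x : FC) : maF x = maMonoidAlgebra (FreeAlgebra.equivMonoidAlgebraFreeMonoid x) := by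
  funext w
  simp only [maF, maMonoidAlgebra, LinearMap.coe_comp, LinearEquiv.coe_coe, Function.comp_apply,
    MonoidAlgebra.coeffLinearEquiv_apply, Finsupp.linearCombination_apply, Finsupp.sum,
    Finset.sum_apply, Pi.smul_apply, smul_eq_mul]

lemma maMonoidAlgebra_mul (p q : MonoidAlgebra ℚ (FreeMonoid ℕ)) :
    maMonoidAlgebra (p * q) = muM (maMonoidAlgebra p) (maMonoidAlgebra q) := by
  have h : (LinearMap.mul ℚ _).compr₂ maMonoidAlgebra = muBilin.compl₁₂ maMonoidAlgebra maMonoidAlgebra := by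
    ext a b
    simp [maMonoidAlgebra, muBilin, maW_append]
  exact congr($h p q)

theorem ma_mul_general (F G : FC) :
    maF (F * G) = muM (maF F) (maF G) := by
  simp only [maF_eq_maMonoidAlgebra, map_mul, maMonoidAlgebra_mul]

/-- ma transforms the associative product into the mould product μ:
ma(FG) = μ(ma(F), ma(G)) for Lie polynomials F, G in ℚ⟨C₁,C₂,…⟩. -/
theorem ma_mul (F G : FC) (hF : F ∈ lieC) (hG : G ∈ lieC) :
    maF (F * G) = muM (maF F) (maF G) :=
  ma_mul_general F G
end

section
/- For push-invariant moulds A and B, the swap operator intertwines the ari brackets: ari(swap(A), swap(B)) = swap(ari(A,B)). -/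
/-- arit(B)·A for moulds in the variables u_i:
(arit(B)·A)(u₁,…,u_r) = Σ_{0≤k<ℓ<r} A(a⌈c)B(b) - Σ_{1≤k<ℓ≤r} A(a⌉c)B(b),
where a = (u₁,…,u_k), b = (u_{k+1},…,u_ℓ), c = (u_{ℓ+1},…,u_r), and a⌈c (resp. a⌉c)
contracts b together with the first entry of c (resp. the last entry of a) into its sum. -/
def aritU (B A : Mould) : Mould := fun w =>
  (∑ k ∈ Finset.range (w.length + 1), ∑ l ∈ Finset.range (w.length + 1),
    if k < l ∧ l < w.length then
      A (w.take k ++ [((w.take (l + 1)).drop k).sum] ++ w.drop (l + 1)) *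
        B ((w.take l).drop k)
    else 0)
  - (∑ k ∈ Finset.range (w.length + 1), ∑ l ∈ Finset.range (w.length + 1),
    if 1 ≤ k ∧ k < l ∧ l ≤ w.length then
      A (w.take (k - 1) ++ [((w.take l).drop (k - 1)).sum] ++ w.drop l) *
        B ((w.take l).drop k)
    else 0)

/-- The ari bracket (u-variable version): ari(A,B) = arit(B)·A - arit(A)·B + lu(A,B). -/
def ariU (A B : Mould) : Mould := fun w => aritU B A w - aritU A B w + luM A B w

/-- arit(B)·A for moulds in the variables v_i:
(arit(B)·A)(v₁,…,v_r) = Σ_{0≤k<ℓ<r} A(a c) B(b⌋) - Σ_{1≤k<ℓ≤r} A(a c) B(⌊b),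
where a = (v₁,…,v_k), b = (v_{k+1},…,v_ℓ), c = (v_{ℓ+1},…,v_r),
b⌋ subtracts v_{ℓ+1} from every entry of b, and ⌊b subtracts v_k. -/
def aritV (B A : Mould) : Mould := fun w =>
  (∑ k ∈ Finset.range (w.length + 1), ∑ l ∈ Finset.range (w.length + 1),
    if k < l ∧ l < w.length then
      A (w.take k ++ w.drop l) * B (((w.take l).drop k).map (fun x => x - w.getD l 0))
    else 0)
  - (∑ k ∈ Finset.range (w.length + 1), ∑ l ∈ Finset.range (w.length + 1),
    if 1 ≤ k ∧ k < l ∧ l ≤ w.length then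
      A (w.take k ++ w.drop l) * B (((w.take l).drop k).map (fun x => x - w.getD (k - 1) 0))
    else 0)

/-- The ari bracket (v-variable version): ari(A,B) = arit(B)·A - arit(A)·B + lu(A,B). -/
def ariV (A B : Mould) : Mould := fun w => aritV B A w - aritV A B w + luM A B w

/-- The variable change (v₁,…,v_r) ↦ (v_r, v_{r-1} - v_r, …, v₁ - v₂). -/
def swapList (w : List ℚ) : List ℚ :=
  match w.reverse with
  | [] => []
  | x :: xs => x :: List.zipWith (fun p q => p - q) xs (x :: xs)

/-- The swap operator. -/
def swapM (A : Mould) : Mould := fun w => A (swapList w)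

/-- The variable change (u₁,…,u_r) ↦ (-u₁-⋯-u_r, u₁, …, u_{r-1}). -/
def pushList (w : List ℚ) : List ℚ :=
  if w = [] then [] else (-(w.sum)) :: w.dropLast

/-! Reversed, `swapList w` is the list of successive differences
`v₁ - v₂, …, v_{r-1} - v_r, v_r` of `w = (v₁, …, v_r)`. So a block of `w` contributes a block of
`swapList w` that depends only on its own entries and on the entry following it, and subtracting
a constant from the block only shifts that following entry. Under a reflection of the summation
indices, the terms `A(ac) B(b⌋)` of the v-variable `arit` together with `μ` thus become the terms
`A(a⌈c) B(b)` together with `μ`, and a term `A(ac) B(⌊b)` becomes `A(a⌉c) B(push b)`: this is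
where push-invariance enters. -/

section SuccessiveDiffs

variable {G : Type*} [AddCommGroup G]

def successiveDiffs (c : G) : List G → List G
  | [] => []
  | x :: t => (x - t.headD c) :: successiveDiffs c t

@[simp]
theorem length_successiveDiffs (c : G) (w : List G) :
    (successiveDiffs c w).length = w.length := by
  induction w with
  | nil => rfl
  | cons x t ih => simp [successiveDiffs, ih]

theorem successiveDiffs_append (c : G) (a b : List G) :
    successiveDiffs c (a ++ b) = successiveDiffs (b.headD c) a ++ successiveDiffs c b := by
  induction a with
  | nil => rfl
  | cons x t ih => cases t <;> simp_all [successiveDiffs]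

theorem successiveDiffs_map_sub (c d : G) (w : List G) :
    successiveDiffs c (w.map (· - d)) = successiveDiffs (c + d) w := by
  induction w with
  | nil => rfl
  | cons x t ih => cases t <;> simp_all [successiveDiffs, sub_sub, add_comm]

theorem sum_successiveDiffs (c : G) (w : List G) :
    (successiveDiffs c w).sum = w.headD c - c := by
  induction w with
  | nil => simp [successiveDiffs]
  | cons x t ih => simp only [successiveDiffs, List.sum_cons, ih]; cases t <;> simp

end SuccessiveDiffs

theorem pushList_reverse_successiveDiffs_cons (x y : ℚ) (w : List ℚ) :
    pushList (successiveDiffs y (x :: w)).reverse = (successiveDiffs x (w ++ [y])).reverse := by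
  simp [pushList, successiveDiffs, successiveDiffs_append, sum_successiveDiffs]

theorem zipWith_sub_cons_eq_reverse_successiveDiffs (x : ℚ) (xs : List ℚ) :
    List.zipWith (· - ·) xs (x :: xs) = (successiveDiffs x xs.reverse).reverse := by
  induction xs generalizing x with
  | nil => rfl
  | cons y ys ih => simp [successiveDiffs_append, successiveDiffs, ih]

theorem swapList_eq_reverse_successiveDiffs (w : List ℚ) :
    swapList w = (successiveDiffs 0 w).reverse := by
  rw [← List.reverse_reverse w]
  unfold swapList
  rw [List.reverse_reverse]
  rcases w.reverse with _ | ⟨x, xs⟩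
  · rfl
  · simp [successiveDiffs_append, successiveDiffs, zipWith_sub_cons_eq_reverse_successiveDiffs]

@[simp]
theorem length_swapList (w : List ℚ) : (swapList w).length = w.length := by
  simp [swapList_eq_reverse_successiveDiffs]

theorem swapList_append (a b : List ℚ) :
    swapList (a ++ b) = swapList b ++ (successiveDiffs (b.headD 0) a).reverse := by
  simp only [swapList_eq_reverse_successiveDiffs, successiveDiffs_append, List.reverse_append]

theorem take_swapList (w : List ℚ) (j : ℕ) :
    (swapList w).take (w.length - j) = swapList (w.drop j) := by
  conv_lhs => rw [← List.take_append_drop j w, swapList_append]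
  rw [List.take_left']
  simp

theorem drop_swapList (w : List ℚ) (j : ℕ) :
    (swapList w).drop (w.length - j) = (successiveDiffs (w.getD j 0) (w.take j)).reverse := by
  conv_lhs => rw [← List.take_append_drop j w, swapList_append]
  rw [List.drop_left']
  · simp [List.getD_eq_getElem?_getD]
  · simp

theorem drop_take_swapList (w : List ℚ) {k l : ℕ} (hkl : k ≤ l) :
    ((swapList w).take (w.length - k)).drop (w.length - l)
      = (successiveDiffs (w.getD l 0) ((w.take l).drop k)).reverse := by
  have h := drop_swapList (w.drop k) (l - k)
  rw [List.length_drop, Nat.sub_sub_sub_cancel_right hkl] at h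
  rw [take_swapList, h, List.drop_take]
  simp [List.getD_eq_getElem?_getD, Nat.add_sub_cancel' hkl]

theorem swapList_map_sub_getD (w : List ℚ) {k l : ℕ} (hkl : k ≤ l) :
    swapList (((w.take l).drop k).map (· - w.getD l 0))
      = ((swapList w).take (w.length - k)).drop (w.length - l) := by
  rw [swapList_eq_reverse_successiveDiffs, successiveDiffs_map_sub, zero_add,
    drop_take_swapList w hkl]

theorem take_add_one_eq_concat_getD {α : Type*} (w : List α) (d : α) {m : ℕ}
    (hm : m < w.length) : w.take (m + 1) = w.take m ++ [w.getD m d] := by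
  rw [List.take_add_one, List.getElem?_eq_getElem hm, List.getD_eq_getElem _ _ hm]
  rfl

theorem drop_take_eq_getD_cons {α : Type*} (w : List α) (d : α) {j m : ℕ} (hjm : j < m)
    (hm : m ≤ w.length) : (w.take m).drop j = w.getD j d :: (w.take m).drop (j + 1) := by
  rw [List.drop_eq_getElem_cons (by simp; omega)]
  simp [List.getD_eq_getElem?_getD, List.getElem?_eq_getElem (show j < w.length by omega)]

theorem swapList_take_append_drop (w : List ℚ) {k l : ℕ} (hk : 0 < k) (hkl : k ≤ l)
    (hl : l ≤ w.length) :
    swapList (w.take k ++ w.drop l)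
      = (swapList w).take (w.length - l)
        ++ [(((swapList w).take (w.length + 1 - k)).drop (w.length - l)).sum]
        ++ (swapList w).drop (w.length + 1 - k) := by
  obtain ⟨j, rfl⟩ : ∃ j, k = j + 1 := ⟨k - 1, by omega⟩
  rw [Nat.add_sub_add_right, take_swapList, drop_swapList, drop_take_swapList w (by omega),
    swapList_append, take_add_one_eq_concat_getD w 0 (by omega)]
  rw [List.sum_reverse, sum_successiveDiffs, drop_take_eq_getD_cons w 0 (by omega) hl,
    List.headD_cons]
  simp [successiveDiffs_append, successiveDiffs]

theorem swapList_map_sub_getD_pred (w : List ℚ) {k l : ℕ} (hk : 0 < k) (hkl : k < l)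
    (hl : l ≤ w.length) :
    swapList (((w.take l).drop k).map (· - w.getD (k - 1) 0))
      = pushList (((swapList w).take (w.length + 1 - k)).drop (w.length + 1 - l)) := by
  obtain ⟨j, rfl⟩ : ∃ j, k = j + 1 := ⟨k - 1, by omega⟩
  obtain ⟨m, rfl⟩ : ∃ m, l = m + 1 := ⟨l - 1, by omega⟩
  rw [Nat.add_sub_cancel, Nat.add_sub_add_right, Nat.add_sub_add_right,
    drop_take_swapList w (by omega),
    drop_take_eq_getD_cons w 0 (j := j) (m := m) (by omega) (by omega),
    pushList_reverse_successiveDiffs_cons, swapList_eq_reverse_successiveDiffs,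
    successiveDiffs_map_sub, zero_add, take_add_one_eq_concat_getD w 0 (by omega),
    List.drop_append_of_le_length (by simp; omega)]

open Finset

/- The two double sums of `aritU`, with the contractions `a⌈c` and `a⌉c`, and of `aritV`, with
`b⌋` and `⌊b`. -/
def aritULceil (B A : Mould) (w : List ℚ) : ℚ :=
  ∑ k ∈ range (w.length + 1), ∑ l ∈ range (w.length + 1),
    if k < l ∧ l < w.length then
      A (w.take k ++ [((w.take (l + 1)).drop k).sum] ++ w.drop (l + 1)) * B ((w.take l).drop k)
    else 0

def aritURceil (B A : Mould) (w : List ℚ) : ℚ :=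
  ∑ k ∈ range (w.length + 1), ∑ l ∈ range (w.length + 1),
    if 1 ≤ k ∧ k < l ∧ l ≤ w.length then
      A (w.take (k - 1) ++ [((w.take l).drop (k - 1)).sum] ++ w.drop l) * B ((w.take l).drop k)
    else 0

theorem aritU_eq_sub (B A : Mould) (w : List ℚ) :
    aritU B A w = aritULceil B A w - aritURceil B A w := rfl

def aritVRfloor (B A : Mould) (w : List ℚ) : ℚ :=
  ∑ k ∈ range (w.length + 1), ∑ l ∈ range (w.length + 1),
    if k < l ∧ l < w.length then
      A (w.take k ++ w.drop l) * B (((w.take l).drop k).map (fun x => x - w.getD l 0))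
    else 0

def aritVLfloor (B A : Mould) (w : List ℚ) : ℚ :=
  ∑ k ∈ range (w.length + 1), ∑ l ∈ range (w.length + 1),
    if 1 ≤ k ∧ k < l ∧ l ≤ w.length then
      A (w.take k ++ w.drop l) * B (((w.take l).drop k).map (fun x => x - w.getD (k - 1) 0))
    else 0

theorem aritV_eq_sub (B A : Mould) (w : List ℚ) :
    aritV B A w = aritVRfloor B A w - aritVLfloor B A w := rfl

theorem sum_range_sum_range_ite_eq_sum_filter (n : ℕ) (P : ℕ → ℕ → Prop) [DecidableRel P]
    (F : ℕ → ℕ → ℚ) :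
    ∑ k ∈ range (n + 1), ∑ l ∈ range (n + 1), (if P k l then F k l else 0)
      = ∑ p ∈ (range (n + 1) ×ˢ range (n + 1)).filter (fun p => P p.1 p.2), F p.1 p.2 := by
  rw [sum_filter, sum_product]

theorem aritVLfloor_swapM (A B : Mould) (hBpush : ∀ w : List ℚ, B (pushList w) = B w)
    (w : List ℚ) : aritVLfloor (swapM B) (swapM A) w = aritURceil B A (swapList w) := by
  unfold aritVLfloor aritURceil
  rw [length_swapList, sum_range_sum_range_ite_eq_sum_filter, sum_range_sum_range_ite_eq_sum_filter]
  set n := w.length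
  refine sum_nbij' (fun p => (n + 1 - p.2, n + 1 - p.1)) (fun p => (n + 1 - p.2, n + 1 - p.1))
    ?_ ?_ ?_ ?_ ?_
  all_goals rintro ⟨k, l⟩ hkl; simp only [mem_filter, mem_product, mem_range] at hkl
  iterate 2 simp only [mem_filter, mem_product, mem_range]; omega
  iterate 2 simp only [Prod.mk.injEq]; omega
  simp only [swapM]
  rw [swapList_take_append_drop w (by omega) (by omega) (by omega),
    swapList_map_sub_getD_pred w (by omega) (by omega) (by omega), hBpush,
    show n + 1 - l - 1 = n - l by omega]

theorem sum_ite_lt_lt_add_sum (n : ℕ) (F : ℕ → ℕ → ℚ) :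
    ∑ k ∈ range (n + 1), ∑ l ∈ range (n + 1), (if k < l ∧ l < n then F k l else 0)
        + ∑ k ∈ range (n + 1), F k n
      = ∑ k ∈ range (n + 1), ∑ l ∈ range (n + 1), (if k < l then F k l else 0) + F n n := by
  have hcol : ∑ k ∈ range (n + 1), F k n
      = ∑ k ∈ range (n + 1), ∑ l ∈ range (n + 1), if l = n then F k l else 0 := by
    simp [sum_ite_eq']
  have hdiag : F n n
      = ∑ k ∈ range (n + 1), ∑ l ∈ range (n + 1), if k = n ∧ l = n then F k l else 0 := by
    simp [ite_and, sum_ite_eq']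
  rw [hcol, hdiag, ← sum_add_distrib, ← sum_add_distrib]
  refine sum_congr rfl fun k hk => ?_
  rw [← sum_add_distrib, ← sum_add_distrib]
  refine sum_congr rfl fun l hl => ?_
  simp only [mem_range] at hk hl
  split_ifs <;> first | omega | simp

theorem aritVRfloor_swapM_add_muM (A B : Mould) (w : List ℚ) :
    aritVRfloor (swapM B) (swapM A) w + muM (swapM A) (swapM B) w
      = aritULceil B A (swapList w) + muM A B (swapList w) := by
  let f : ℕ → ℕ → ℚ := fun k l => swapM A (w.take k ++ w.drop l) *
    swapM B (((w.take l).drop k).map (fun x => x - w.getD l 0))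
  -- The reflection `(k, l) ↦ (n - l, n - k)` sends the column `l = n` of `f`, which is
  -- `μ(swap A, swap B)`, to the row `k = 0` of `aritULceil`, and the row `k = 0` of `f` to the
  -- column `l = n` of `g`, which is `μ(A, B)`.
  let g : ℕ → ℕ → ℚ := fun k l =>
    if l = w.length then A ((swapList w).take k) * B ((swapList w).drop k)
    else A ((swapList w).take k ++ [(((swapList w).take (l + 1)).drop k).sum]
        ++ (swapList w).drop (l + 1)) * B (((swapList w).take l).drop k)
  have hV : aritVRfloor (swapM B) (swapM A) w + muM (swapM A) (swapM B) w
      = ∑ k ∈ range (w.length + 1), ∑ l ∈ range (w.length + 1),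
          (if k < l ∧ l < w.length then f k l else 0)
        + ∑ k ∈ range (w.length + 1), f k w.length := by
    congr 1
    refine sum_congr rfl fun k _ => ?_
    simp [f]
  have hU : aritULceil B A (swapList w) + muM A B (swapList w)
      = ∑ k ∈ range (w.length + 1), ∑ l ∈ range (w.length + 1),
          (if k < l ∧ l < w.length then g k l else 0)
        + ∑ k ∈ range (w.length + 1), g k w.length := by
    unfold aritULceil muM
    rw [length_swapList]
    congr 1
    · refine sum_congr rfl fun k _ => sum_congr rfl fun l _ => ?_
      split_ifs with h
      · simp [g, h.2.ne]
      · rfl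
    · simp [g]
  rw [hV, hU, sum_ite_lt_lt_add_sum, sum_ite_lt_lt_add_sum, sum_range_sum_range_ite_eq_sum_filter,
    sum_range_sum_range_ite_eq_sum_filter]
  congr 1
  · refine sum_nbij' (fun p => (w.length - p.2, w.length - p.1))
      (fun p => (w.length - p.2, w.length - p.1)) ?_ ?_ ?_ ?_ ?_
    all_goals rintro ⟨k, l⟩ hkl; simp only [mem_filter, mem_product, mem_range] at hkl
    iterate 2 simp only [mem_filter, mem_product, mem_range]; omega
    iterate 2 simp only [Prod.mk.injEq]; omega
    simp only [f, g]
    rcases Nat.eq_zero_or_pos k with rfl | hk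
    · rw [if_pos (Nat.sub_zero _)]
      simp only [swapM, List.take_zero, List.nil_append]
      rw [← take_swapList, swapList_map_sub_getD w (Nat.zero_le l), Nat.sub_zero,
        List.take_of_length_le (length_swapList w).le]
    · rw [if_neg (by omega)]
      simp only [swapM]
      rw [swapList_take_append_drop w hk (by omega) (by omega),
        swapList_map_sub_getD w (by omega), show w.length + 1 - k = w.length - k + 1 by omega]
  · simp [f, g, swapM, List.take_of_length_le, List.drop_of_length_le,
      show swapList [] = [] from rfl]

theorem swap_ari_push_invariant_general (A B : Mould)
    (hApush : ∀ w : List ℚ, A (pushList w) = A w)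
    (hBpush : ∀ w : List ℚ, B (pushList w) = B w) :
    ariV (swapM A) (swapM B) = swapM (ariU A B) := by
  funext w
  have hAB := aritVRfloor_swapM_add_muM A B w
  have hBA := aritVRfloor_swapM_add_muM B A w
  have hB := aritVLfloor_swapM A B hBpush w
  have hA := aritVLfloor_swapM B A hApush w
  show aritV (swapM B) (swapM A) w - aritV (swapM A) (swapM B) w + luM (swapM A) (swapM B) w
    = aritU B A (swapList w) - aritU A B (swapList w) + luM A B (swapList w)
  rw [aritV_eq_sub, aritV_eq_sub, aritU_eq_sub, aritU_eq_sub]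
  unfold luM
  linarith

/-- For push-invariant moulds A, B, swap intertwines the (u-variable and v-variable) ari
brackets: ari(swap(A), swap(B)) = swap(ari(A,B)). -/
theorem swap_ari_push_invariant (A B : Mould) (hA0 : A [] = 0) (hB0 : B [] = 0)
    (hApush : ∀ w : List ℚ, A (pushList w) = A w)
    (hBpush : ∀ w : List ℚ, B (pushList w) = B w) :
    ariV (swapM A) (swapM B) = swapM (ariU A B) :=
  swap_ari_push_invariant_general A B hApush hBpush
end

section
/- The operators arit satisfy arit(B)∘arit(A) - arit(A)∘arit(B) = arit(ari(A,B)) for all moulds A, B with A(∅)=B(∅)=0. -/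
/-!
Write `aritU B A w` as a sum over the nonempty segments `s` of `w` of `A (w / s) * δB s`, where
`w / s` contracts `s` to the single letter `s.sum` and `δB s = B s.dropLast - B s.tail`
(`aritU_eq_sum`, `trimDiff`). Composing two such operators gives a sum over a segment `p` of `w`
and a segment `q` of `w / p`. If `q` avoids the contracted letter, `p` and `q` are disjoint
segments of `w` that can be contracted in either order, so these terms are symmetric in the two
operators and cancel in the commutator. If `q` contains the contracted letter, it comes from a
segment `T ⊇ p` of `w` with `(w / p) / q = w / T`, and these terms add up to
`∑ T, M (w / T) * N X Y T` with `N X Y u = ∑ s, δX (u / s) * δY s` (`nestedDiff`). Finally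
`N A B - N B A = δ (ari A B)`: the segments of `u` avoiding its last (resp. first) letter give
`arit` on `u.dropLast` (resp. `u.tail`), and the remaining ones give the `lu` part.
-/

namespace List

variable {α : Type*} {u L R : List α} {a b c d i j k : ℕ}

def segment (u : List α) (a c : ℕ) : List α := (u.take c).drop a

@[simp] lemma segment_zero_left : u.segment 0 c = u.take c := rfl

@[simp] lemma segment_length_right : u.segment a u.length = u.drop a := by
  simp [segment]

lemma length_segment (h : c ≤ u.length) : (u.segment a c).length = c - a := by
  simp [segment]; omega

lemma segment_eq_nil_of_le (h : c ≤ a) : u.segment a c = [] :=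
  drop_eq_nil_of_le (by simp; omega)

lemma dropLast_segment (h : c ≤ u.length) : (u.segment a c).dropLast = u.segment a (c - 1) := by
  obtain hca | hac := le_or_gt c a
  · simp [segment_eq_nil_of_le hca, segment_eq_nil_of_le (show c - 1 ≤ a by omega)]
  · rw [dropLast_eq_take, length_segment h, segment, take_drop, take_take,
      show min (a + (c - a - 1)) c = c - 1 by omega]
    rfl

lemma segment_append_segment (hab : a ≤ b) (hbc : b ≤ c) :
    u.segment a b ++ u.segment b c = u.segment a c := by
  have : u.take b = (u.take c).take b := by simp [take_take, Nat.min_eq_left hbc]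
  rw [segment, segment, segment, this]
  conv_rhs => rw [← take_append_drop b (u.take c)]
  rw [drop_append]
  rcases le_total b (u.take c).length with hb | hb
  · rw [length_take_of_le hb, Nat.sub_eq_zero_of_le hab, drop_zero]
  · simp [drop_eq_nil_of_le hb]

lemma segment_take (h : c ≤ k) : (u.take k).segment a c = u.segment a c := by
  simp [segment, take_take, Nat.min_eq_left h]

lemma segment_drop : (u.drop k).segment a c = u.segment (k + a) (k + c) := by
  simp [segment, take_drop]

lemma segment_segment (h : a + j ≤ c) :
    (u.segment a c).segment i j = u.segment (a + i) (a + j) := by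
  simp [segment, take_drop, take_take, Nat.min_eq_left h]

lemma take_segment (h : a + k ≤ c) : (u.segment a c).take k = u.segment a (a + k) := by
  simpa using segment_segment (u := u) (i := 0) h

lemma drop_segment : (u.segment a c).drop k = u.segment (a + k) c := by
  simp [segment, drop_drop]

lemma tail_segment : (u.segment a c).tail = u.segment (a + 1) c := by
  simp [segment]

lemma segment_append_left (h : c ≤ L.length) : (L ++ R).segment a c = L.segment a c := by
  simp [segment, take_append_of_le_length h]

lemma segment_append_right (h : L.length ≤ a) :
    (L ++ R).segment a c = R.segment (a - L.length) (c - L.length) := by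
  rcases le_total c L.length with hc | hc
  · simp [segment, take_append, Nat.sub_eq_zero_of_le hc]
    omega
  · simp [segment, take_append, drop_append, Nat.min_eq_right hc]
    omega

lemma segment_dropLast (h : c < u.length) : u.dropLast.segment a c = u.segment a c := by
  rw [dropLast_eq_take, segment_take (by omega)]

lemma segment_tail : u.tail.segment a c = u.segment (a + 1) (c + 1) := by
  rw [← drop_one, segment_drop, Nat.add_comm 1 a, Nat.add_comm 1 c]

lemma segment_append_of_le_of_le (ha : a ≤ L.length) (hc : L.length ≤ c) :
    (L ++ R).segment a c = L.drop a ++ R.take (c - L.length) := by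
  rw [segment, take_append, take_of_length_le hc, drop_append_of_le_length ha]

variable [AddMonoid α]

def contract (u : List α) (a c : ℕ) : List α := u.take a ++ [(u.segment a c).sum] ++ u.drop c

lemma length_contract (hac : a ≤ c) (hc : c ≤ u.length) :
    (u.contract a c).length = a + (u.length - c) + 1 := by
  simp [contract]; omega

lemma contract_append_left (hac : a ≤ c) (hc : c ≤ L.length) :
    (L ++ R).contract a c = L.contract a c ++ R := by
  simp [contract, segment_append_left hc, take_append_of_le_length (hac.trans hc),
    drop_append_of_le_length hc]

lemma contract_append_right (h : L.length ≤ a) (hac : a ≤ c) :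
    (L ++ R).contract a c = L ++ R.contract (a - L.length) (c - L.length) := by
  simp [contract, segment_append_right h, take_append, drop_append,
    take_of_length_le h, drop_eq_nil_of_le (h.trans hac)]

lemma dropLast_contract (hac : a ≤ c) (hc : c < u.length) :
    (u.contract a c).dropLast = u.dropLast.contract a c := by
  have hu : u ≠ [] := ne_nil_of_length_pos (by omega)
  conv_lhs => rw [← dropLast_append_getLast hu]
  rw [contract_append_left hac (by simp; omega), dropLast_concat]

lemma dropLast_contract_length : (u.contract a u.length).dropLast = u.take a := by
  simp [contract]

lemma tail_contract (hac : a ≤ c) (hc : c < u.length) :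
    (u.contract (a + 1) (c + 1)).tail = u.tail.contract a c := by
  obtain ⟨x, v, rfl⟩ := exists_cons_of_ne_nil (ne_nil_of_length_pos (by omega : 0 < u.length))
  rw [← singleton_append, contract_append_right (by simp) (by omega)]
  simp

lemma contract_contract_comm (hab : a < b) (hbc : b ≤ c) (hcd : c ≤ d) (hd : d ≤ u.length) :
    (u.contract c d).contract a b =
      (u.contract a b).contract (c - (b - a) + 1) (d - (b - a) + 1) := by
  have hL : (u.take a ++ [(u.segment a b).sum]).length = a + 1 := by simp; omega
  rw [contract.eq_1 u c d, append_assoc, contract_append_left hab.le (by simp; omega),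
    contract.eq_1 u a b, contract_append_right (by omega) (by omega), hL,
    show c - (b - a) + 1 - (a + 1) = c - b by omega,
    show d - (b - a) + 1 - (a + 1) = d - b by omega]
  simp [contract, segment_take hbc, segment_drop, take_take, drop_take, drop_drop,
    Nat.add_sub_of_le hbc, Nat.add_sub_of_le (hbc.trans hcd), Nat.min_eq_left (hab.le.trans hbc)]

lemma segment_contract_of_le (hbc : b ≤ c) (hc : c ≤ u.length) :
    (u.contract c d).segment a b = u.segment a b := by
  rw [contract.eq_1 u c d, append_assoc, segment_append_left (by simp; omega), segment_take hbc]

lemma segment_contract_of_lt (hab : a < b) (hbc : b ≤ c) (hcd : c ≤ d) (hb : b ≤ u.length) :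
    (u.contract a b).segment (c - (b - a) + 1) (d - (b - a) + 1) = u.segment c d := by
  rw [contract, segment_append_right (by simp; omega), segment_drop]
  simp only [length_append, length_take, length_singleton, Nat.min_eq_left (hab.le.trans hb)]
  congr 1 <;> omega

lemma take_contract (hac : a ≤ c) (hc : c ≤ u.length) : (u.contract c d).take a = u.take a := by
  rw [contract, append_assoc, take_append_of_le_length (by simp; omega), take_take,
    Nat.min_eq_left hac]

lemma drop_contract (hck : c < k) (hc : c ≤ u.length) :
    (u.contract c d).drop k = u.drop (d + (k - c - 1)) := by
  rw [contract, drop_append, drop_eq_nil_of_le (by simp; omega)]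
  simp [drop_drop, Nat.min_eq_left hc]
  omega

lemma segment_contract_of_le_of_lt (hab : a ≤ b) (hbd : b < d) (hb : b ≤ u.length) :
    (u.contract b c).segment a d =
      u.segment a b ++ [(u.segment b c).sum] ++ u.segment c (c + (d - b - 1)) := by
  rw [contract, append_assoc, segment_append_of_le_of_le (by simp; omega) (by simp; omega),
    length_take_of_le hb, show d - b = (d - b - 1) + 1 by omega, singleton_append,
    take_succ_cons, take_drop]
  simp [segment]

lemma contract_contract_of_le_of_lt (hab : a ≤ b) (hbd : b < d) (hbc : b ≤ c)
    (hb : b ≤ u.length) :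
    (u.contract b c).contract a d = u.contract a (c + (d - b - 1)) := by
  have hsum : (u.segment a b ++ [(u.segment b c).sum] ++ u.segment c (c + (d - b - 1))).sum =
      (u.segment a (c + (d - b - 1))).sum := by
    rw [sum_append, sum_append, sum_singleton, ← sum_append, segment_append_segment hab hbc,
      ← sum_append, segment_append_segment (hab.trans hbc) (Nat.le_add_right _ _)]
  rw [contract, segment_contract_of_le_of_lt hab hbd hb, hsum, take_contract hab hb,
    drop_contract hbd hb]
  rfl

lemma segment_contract_eq_contract_segment (hab : a ≤ b) (hbd : b < d) (hbc : b ≤ c)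
    (hb : b ≤ u.length) :
    (u.contract b c).segment a d = (u.segment a (c + (d - b - 1))).contract (b - a) (c - a) := by
  rw [segment_contract_of_le_of_lt hab hbd hb, contract, ← segment_zero_left,
    segment_segment (by omega), segment_segment (by omega), drop_segment, Nat.add_zero,
    Nat.add_sub_of_le hab, Nat.add_sub_of_le (hab.trans hbc)]

end List

open Finset

def segmentPairs (n : ℕ) : Finset (ℕ × ℕ) :=
  (range (n + 1) ×ˢ range (n + 1)).filter fun p => p.1 < p.2

lemma mem_segmentPairs {n : ℕ} {p : ℕ × ℕ} : p ∈ segmentPairs n ↔ p.1 < p.2 ∧ p.2 ≤ n := by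
  simp only [segmentPairs, mem_filter, mem_product, mem_range]
  omega

lemma segmentPairs_zero : segmentPairs 0 = ∅ := rfl

section Sums

variable {M : Type*} [AddCommMonoid M]

lemma sum_segmentPairs_succ (n : ℕ) (f : ℕ × ℕ → M) :
    ∑ p ∈ segmentPairs (n + 1), f p =
      ∑ p ∈ segmentPairs n, f p + ∑ a ∈ range (n + 1), f (a, n + 1) := by
  rw [← sum_filter_add_sum_filter_not _ fun p => p.2 ≤ n]
  congr 1
  · apply sum_nbij' id id <;> simp [mem_segmentPairs] <;> omega
  · apply sum_nbij' Prod.fst (fun a => (a, n + 1)) <;> simp [mem_segmentPairs] <;>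
      intro a b _ _ _ <;> first | omega | (congr 2; omega)

lemma sum_segmentPairs_succ' (n : ℕ) (f : ℕ × ℕ → M) :
    ∑ p ∈ segmentPairs (n + 1), f p =
      ∑ p ∈ segmentPairs n, f (p.1 + 1, p.2 + 1) + ∑ c ∈ range (n + 1), f (0, c + 1) := by
  rw [← sum_filter_add_sum_filter_not _ fun p => 0 < p.1]
  congr 1
  · apply sum_nbij' (fun p => (p.1 - 1, p.2 - 1)) (fun p => (p.1 + 1, p.2 + 1)) <;>
      simp [mem_segmentPairs] <;> intro a b _ _ _ <;> first | omega | (congr 2 <;> omega)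
  · apply sum_nbij' (fun p => p.2 - 1) (fun c => (0, c + 1)) <;> simp [mem_segmentPairs] <;>
      intro a b _ _ _ <;> first | omega | (congr 2; omega)

lemma sum_range_sum_range_ite (n : ℕ) (P : ℕ → ℕ → Prop) [DecidableRel P] (f : ℕ → ℕ → M) :
    ∑ k ∈ range n, ∑ l ∈ range n, (if P k l then f k l else 0) =
      ∑ p ∈ (range n ×ˢ range n).filter (fun p => P p.1 p.2), f p.1 p.2 := by
  rw [sum_filter, sum_product]

end Sums

namespace Mould

def trimDiff (X : Mould) (u : List ℚ) : ℚ := X u.dropLast - X u.tail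

lemma trimDiff_segment (X : Mould) {u : List ℚ} {a c : ℕ} (hc : c ≤ u.length) :
    trimDiff X (u.segment a c) = X (u.segment a (c - 1)) - X (u.segment (a + 1) c) := by
  rw [trimDiff, List.dropLast_segment hc, List.tail_segment]

lemma aritU_eq_sum (B A : Mould) (w : List ℚ) :
    aritU B A w = ∑ p ∈ segmentPairs w.length,
      A (w.contract p.1 p.2) * trimDiff B (w.segment p.1 p.2) := by
  set n := w.length
  change (∑ k ∈ range (n + 1), ∑ l ∈ range (n + 1),
      if k < l ∧ l < n then A (w.contract k (l + 1)) * B (w.segment k l) else 0) -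
    (∑ k ∈ range (n + 1), ∑ l ∈ range (n + 1),
      if 1 ≤ k ∧ k < l ∧ l ≤ n then A (w.contract (k - 1) l) * B (w.segment k l) else 0) = _
  -- The two double sums are the two halves of `trimDiff B` over the segments of length at
  -- least 2; a segment of length 1 contributes `B [] - B [] = 0`.
  have long_segments : ∑ p ∈ segmentPairs n,
      A (w.contract p.1 p.2) * trimDiff B (w.segment p.1 p.2) =
      ∑ p ∈ (segmentPairs n).filter (fun p => p.1 + 1 < p.2),
        A (w.contract p.1 p.2) * (B (w.segment p.1 (p.2 - 1)) - B (w.segment (p.1 + 1) p.2)) := by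
    rw [sum_filter]
    refine sum_congr rfl fun p hp => ?_
    rw [mem_segmentPairs] at hp
    rw [trimDiff_segment B hp.2]
    split_ifs
    · rfl
    · rw [List.segment_eq_nil_of_le (by omega), List.segment_eq_nil_of_le (c := p.2) (by omega),
        sub_self, mul_zero]
  rw [long_segments, sum_range_sum_range_ite, sum_range_sum_range_ite]
  simp only [mul_sub, sum_sub_distrib]
  congr 1
  · refine sum_nbij' (fun p => (p.1, p.2 + 1)) (fun p => (p.1, p.2 - 1)) ?_ ?_ ?_ ?_ ?_ <;>
      rintro ⟨a, c⟩ h <;>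
      simp only [mem_filter, mem_product, mem_range, mem_segmentPairs, Prod.mk.injEq] at h ⊢ <;>
      first | omega | (simp <;> omega)
  · refine sum_nbij' (fun p => (p.1 - 1, p.2)) (fun p => (p.1 + 1, p.2)) ?_ ?_ ?_ ?_ ?_ <;>
      rintro ⟨a, c⟩ h <;>
      simp only [mem_filter, mem_product, mem_range, mem_segmentPairs, Prod.mk.injEq] at h ⊢ <;>
      first | omega | (simp <;> omega) | rw [Nat.sub_add_cancel (by omega)]

def nestedDiff (X Y : Mould) (u : List ℚ) : ℚ :=
  ∑ s ∈ segmentPairs u.length, trimDiff X (u.contract s.1 s.2) * trimDiff Y (u.segment s.1 s.2)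

def boundarySum (X Y : Mould) (u : List ℚ) : ℚ :=
  ∑ a ∈ range u.length,
    (X (u.take a) * trimDiff Y (u.drop a) - X (u.drop (a + 1)) * trimDiff Y (u.take (a + 1)))

lemma sum_dropLast_contract (X Y : Mould) (u : List ℚ) :
    ∑ s ∈ segmentPairs u.length,
        X (u.contract s.1 s.2).dropLast * trimDiff Y (u.segment s.1 s.2) =
      aritU Y X u.dropLast + ∑ a ∈ range u.length, X (u.take a) * trimDiff Y (u.drop a) := by
  rcases hn : u.length with _ | m
  · simp [aritU_eq_sum, segmentPairs_zero, List.eq_nil_of_length_eq_zero hn]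
  rw [sum_segmentPairs_succ, aritU_eq_sum, List.length_dropLast, hn, Nat.add_sub_cancel]
  congr 1
  · refine sum_congr rfl fun s hs => ?_
    rw [mem_segmentPairs] at hs
    rw [List.dropLast_contract hs.1.le (by omega), List.segment_dropLast (by omega)]
  · refine sum_congr rfl fun a _ => ?_
    rw [← hn, List.dropLast_contract_length, List.segment_length_right]

lemma sum_tail_contract (X Y : Mould) (u : List ℚ) :
    ∑ s ∈ segmentPairs u.length, X (u.contract s.1 s.2).tail * trimDiff Y (u.segment s.1 s.2) =
      aritU Y X u.tail +
        ∑ c ∈ range u.length, X (u.drop (c + 1)) * trimDiff Y (u.take (c + 1)) := by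
  rcases hn : u.length with _ | m
  · simp [aritU_eq_sum, segmentPairs_zero, List.eq_nil_of_length_eq_zero hn]
  rw [sum_segmentPairs_succ', aritU_eq_sum, List.length_tail, hn, Nat.add_sub_cancel]
  congr 1
  refine sum_congr rfl fun s hs => ?_
  rw [mem_segmentPairs] at hs
  rw [List.tail_contract hs.1.le (by omega), List.segment_tail]

lemma nestedDiff_eq (X Y : Mould) (u : List ℚ) :
    nestedDiff X Y u = aritU Y X u.dropLast - aritU Y X u.tail + boundarySum X Y u := by
  have hX : ∀ v, trimDiff X v = X v.dropLast - X v.tail := fun _ => rfl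
  simp only [nestedDiff, boundarySum, hX, sub_mul, sum_sub_distrib]
  rw [sum_dropLast_contract, sum_tail_contract]
  ring

lemma boundarySum_sub_boundarySum (X Y : Mould) (u : List ℚ) :
    boundarySum X Y u - boundarySum Y X u = luM X Y u.dropLast - luM X Y u.tail := by
  rcases hn : u.length with _ | m
  · simp [List.eq_nil_of_length_eq_zero hn, boundarySum]
  have hdropLast : u.dropLast = u.segment 0 m := by rw [List.dropLast_eq_take, hn]; rfl
  have htail : u.tail = u.segment 1 (m + 1) := by
    rw [← hn, List.segment_length_right, List.drop_one]
  rw [boundarySum, boundarySum, luM, luM, muM, muM, muM, muM, hdropLast, htail,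
    List.length_segment (by omega), List.length_segment (by omega), hn]
  simp only [Nat.sub_zero, Nat.add_sub_cancel, ← sum_sub_distrib]
  refine sum_congr rfl fun i hi => ?_
  have hi : i ≤ m := Nat.lt_succ_iff.mp (mem_range.mp hi)
  have htake : ∀ k, u.take k = u.segment 0 k := fun _ => rfl
  have hdrop : ∀ k, u.drop k = u.segment k (m + 1) := fun k => by
    rw [← hn, List.segment_length_right]
  rw [List.take_segment (by omega), List.take_segment (by omega), List.drop_segment,
    List.drop_segment, htake, htake, hdrop, hdrop, trimDiff_segment Y (by omega),
    trimDiff_segment Y (by omega), trimDiff_segment X (by omega), trimDiff_segment X (by omega)]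
  simp only [Nat.zero_add, Nat.add_sub_cancel, Nat.add_comm 1 i]
  ring

lemma trimDiff_ariU (A B : Mould) (u : List ℚ) :
    trimDiff (ariU A B) u = nestedDiff A B u - nestedDiff B A u := by
  have hboundary := boundarySum_sub_boundarySum A B u
  rw [nestedDiff_eq, nestedDiff_eq, trimDiff, ariU, ariU]
  linarith

def composeTerm (M X Y : Mould) (w : List ℚ) (p q : ℕ × ℕ) : ℚ :=
  M ((w.contract p.1 p.2).contract q.1 q.2) * trimDiff X ((w.contract p.1 p.2).segment q.1 q.2) *
    trimDiff Y (w.segment p.1 p.2)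

/-- Pairs of a segment `p` of a word of length `n` and a segment `q` of the word obtained by
contracting `p`; the contracted letter has index `p.1`. -/
def nestedPairs (n : ℕ) : Finset ((_ : ℕ × ℕ) × (ℕ × ℕ)) :=
  (segmentPairs n).sigma fun p => segmentPairs (p.1 + (n - p.2) + 1)

lemma aritU_aritU_eq_sum (M X Y : Mould) (w : List ℚ) :
    aritU Y (aritU X M) w = ∑ x ∈ nestedPairs w.length, composeTerm M X Y w x.1 x.2 := by
  rw [nestedPairs, sum_sigma, aritU_eq_sum]
  refine sum_congr rfl fun p hp => ?_
  rw [mem_segmentPairs] at hp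
  rw [aritU_eq_sum, List.length_contract hp.1.le hp.2, sum_mul]
  rfl

lemma sum_nestedPairs_eq_add_add (n : ℕ) (F : (_ : ℕ × ℕ) × (ℕ × ℕ) → ℚ) :
    ∑ x ∈ nestedPairs n, F x =
      ∑ x ∈ (nestedPairs n).filter (fun x => x.2.2 ≤ x.1.1), F x +
      ∑ x ∈ (nestedPairs n).filter (fun x => x.1.1 < x.2.1), F x +
      ∑ x ∈ (nestedPairs n).filter (fun x => x.2.1 ≤ x.1.1 ∧ x.1.1 < x.2.2), F x := by
  rw [sum_filter, sum_filter, sum_filter, ← sum_add_distrib, ← sum_add_distrib]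
  refine sum_congr rfl fun x hx => ?_
  simp only [nestedPairs, mem_sigma, mem_segmentPairs] at hx
  split_ifs <;> first | omega | simp

lemma sum_left_eq_sum_right (M X Y : Mould) (w : List ℚ) :
    ∑ x ∈ (nestedPairs w.length).filter (fun x => x.2.2 ≤ x.1.1), composeTerm M Y X w x.1 x.2 =
      ∑ x ∈ (nestedPairs w.length).filter (fun x => x.1.1 < x.2.1),
        composeTerm M X Y w x.1 x.2 := by
  refine sum_nbij' (fun x => ⟨x.2, (x.1.1 - (x.2.2 - x.2.1) + 1, x.1.2 - (x.2.2 - x.2.1) + 1)⟩)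
    (fun x => ⟨(x.2.1 + (x.1.2 - x.1.1) - 1, x.2.2 + (x.1.2 - x.1.1) - 1), x.1⟩)
    ?_ ?_ ?_ ?_ ?_ <;> rintro ⟨⟨c, d⟩, ⟨a, b⟩⟩ hx <;>
    simp only [nestedPairs, mem_filter, mem_sigma, mem_segmentPairs] at hx ⊢
  case refine_5 =>
    obtain ⟨⟨⟨hcd, hd⟩, hab, -⟩, hbc⟩ := hx
    simp only [composeTerm]
    rw [List.contract_contract_comm hab hbc hcd.le hd, List.segment_contract_of_le hbc (by omega),
      List.segment_contract_of_lt hab hbc hcd.le (by omega)]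
    ring
  all_goals (try simp only [Sigma.mk.injEq, Prod.mk.injEq, heq_eq_eq, and_true, true_and]); omega

lemma sum_straddle_eq (M X Y : Mould) (w : List ℚ) :
    ∑ x ∈ (nestedPairs w.length).filter (fun x => x.2.1 ≤ x.1.1 ∧ x.1.1 < x.2.2),
        composeTerm M X Y w x.1 x.2 =
      ∑ p ∈ segmentPairs w.length,
        M (w.contract p.1 p.2) * nestedDiff X Y (w.segment p.1 p.2) := by
  have hsigma : ∑ p ∈ segmentPairs w.length,
      M (w.contract p.1 p.2) * nestedDiff X Y (w.segment p.1 p.2) =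
      ∑ x ∈ (segmentPairs w.length).sigma (fun p => segmentPairs (p.2 - p.1)),
        M (w.contract x.1.1 x.1.2) * (trimDiff X ((w.segment x.1.1 x.1.2).contract x.2.1 x.2.2) *
          trimDiff Y ((w.segment x.1.1 x.1.2).segment x.2.1 x.2.2)) := by
    rw [sum_sigma]
    refine sum_congr rfl fun p hp => ?_
    rw [nestedDiff, mul_sum, List.length_segment (mem_segmentPairs.1 hp).2]
  rw [hsigma]
  -- `q` straddling the contracted letter is the image of the segment `T ⊇ p` of `w`,
  -- and `p` sits in `T` at `(p.1 - T.1, p.2 - T.1)`.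
  refine sum_nbij' (fun x => ⟨(x.2.1, x.1.2 + (x.2.2 - x.1.1 - 1)), (x.1.1 - x.2.1, x.1.2 - x.2.1)⟩)
    (fun x => ⟨(x.1.1 + x.2.1, x.1.1 + x.2.2), (x.1.1, x.1.2 - (x.2.2 - x.2.1) + 1)⟩)
    ?_ ?_ ?_ ?_ ?_ <;> rintro ⟨⟨b, c⟩, ⟨a, d⟩⟩ hx <;>
    simp only [nestedPairs, mem_filter, mem_sigma, mem_segmentPairs] at hx ⊢
  case refine_5 =>
    obtain ⟨⟨⟨hbc, hc⟩, -, -⟩, hab, hbd⟩ := hx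
    simp only [composeTerm]
    rw [List.contract_contract_of_le_of_lt hab hbd hbc.le (by omega),
      List.segment_contract_eq_contract_segment hab hbd hbc.le (by omega),
      List.segment_segment (by omega), Nat.add_sub_of_le hab, Nat.add_sub_of_le (by omega : a ≤ c)]
    ring
  all_goals (try simp only [Sigma.mk.injEq, Prod.mk.injEq, heq_eq_eq, true_and]); omega

def disjointSum (M X Y : Mould) (w : List ℚ) : ℚ :=
  ∑ x ∈ (nestedPairs w.length).filter (fun x => x.2.2 ≤ x.1.1), composeTerm M X Y w x.1 x.2

lemma aritU_aritU_eq (M X Y : Mould) (w : List ℚ) :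
    aritU Y (aritU X M) w = disjointSum M X Y w + disjointSum M Y X w +
      ∑ p ∈ segmentPairs w.length, M (w.contract p.1 p.2) * nestedDiff X Y (w.segment p.1 p.2) := by
  rw [aritU_aritU_eq_sum, sum_nestedPairs_eq_add_add, ← sum_left_eq_sum_right, sum_straddle_eq]
  rfl

end Mould

theorem arit_comm_eq_arit_ari_general (A B : Mould) :
    ∀ (M : Mould) (w : List ℚ),
      aritU B (aritU A M) w - aritU A (aritU B M) w = aritU (ariU A B) M w := by
  intro M w
  rw [Mould.aritU_aritU_eq, Mould.aritU_aritU_eq, Mould.aritU_eq_sum (ariU A B)]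
  simp only [Mould.trimDiff_ariU, mul_sub, sum_sub_distrib]
  ring

/-- arit(B)∘arit(A) - arit(A)∘arit(B) = arit(ari(A,B)) as operators on moulds. -/
theorem arit_comm_eq_arit_ari (A B : Mould) (hA : A [] = 0) (hB : B [] = 0) :
    ∀ (M : Mould) (w : List ℚ),
      aritU B (aritU A M) w - aritU A (aritU B M) w = aritU (ariU A B) M w :=
  arit_comm_eq_arit_ari_general A B
end

section
/- Let A be a polynomial-valued push-invariant mould concentrated in depth 3 that is divisible by (u_1+u_2+u_3) (i.e. A(u_1,u_2,u_3) = (u_1+u_2+u_3)·B(u_1,u_2,u_3) for a polynomial B). Then A is divisible by Δ_3 = u_1 u_2 u_3 (u_1+u_2+u_3). -/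
/-!
Push-invariance says `A(u₁, u₂, u₃) = A(-u₁-u₂-u₃, u₁, u₂)`. Applying it once, twice or three
times moves any point with one vanishing coordinate to a point on the plane `u₁ + u₂ + u₃ = 0`,
where `A` vanishes by divisibility. Hence `A` vanishes on each coordinate plane, so each `uᵢ`
divides `A`; since the `uᵢ` are primes not dividing `u₁ + u₂ + u₃`, they divide the cofactor.
-/

open MvPolynomial

namespace MvPolynomial

variable {σ R : Type*} [CommRing R]

theorem X_dvd_sub_aeval_update_X_zero [DecidableEq σ] (i : σ) (p : MvPolynomial σ R) :
    X i ∣ p - aeval (Function.update X i 0) p := by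
  induction p using MvPolynomial.induction_on with
  | C a => simp
  | add p q hp hq => simpa only [map_add, add_sub_add_comm] using dvd_add hp hq
  | mul_X p j hp =>
    rcases eq_or_ne j i with rfl | hji
    · simp
    · rw [map_mul, aeval_X, Function.update_of_ne hji, ← sub_mul]
      exact hp.mul_right (X j)

theorem X_dvd_iff_aeval_update_X_zero [DecidableEq σ] {i : σ} {p : MvPolynomial σ R} :
    X i ∣ p ↔ aeval (Function.update X i (0 : MvPolynomial σ R)) p = 0 := by
  constructor
  · rintro ⟨q, rfl⟩
    simp
  · intro h
    simpa only [h, sub_zero] using X_dvd_sub_aeval_update_X_zero i p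

theorem coeff_eq_zero_of_X_dvd {i : σ} {p : MvPolynomial σ R} (h : X i ∣ p) {m : σ →₀ ℕ}
    (hm : m i = 0) : coeff m p = 0 := by
  classical
  obtain ⟨q, rfl⟩ := h
  simp [coeff_X_mul', hm]

theorem not_X_dvd_X_add_X_add_X [Nontrivial R] (i : Fin 3) :
    ¬ X i ∣ (X 0 + X 1 + X 2 : MvPolynomial (Fin 3) R) := by
  intro h
  obtain ⟨j, hij⟩ : ∃ j, i ≠ j := ⟨i + 1, by fin_cases i <;> decide⟩
  have hcoeff := coeff_eq_zero_of_X_dvd h (m := Finsupp.single j 1) (Finsupp.single_eq_of_ne hij)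
  fin_cases j <;> simp [coeff_X, Finsupp.single_left_inj one_ne_zero] at hcoeff

end MvPolynomial

section Push

variable {R S : Type*} [CommRing R] [CommRing S] [Algebra R S] {A : MvPolynomial (Fin 3) R}

theorem aeval_push_eq (hpush : aeval ![-(X 0) - X 1 - X 2, X 0, X 1] A = A)
    {a b c d : S} (hd : d = -a - b - c) : aeval ![d, a, b] A = aeval ![a, b, c] A := by
  conv_rhs => rw [← hpush, comp_aeval_apply]
  congr 2
  funext i
  fin_cases i <;> simp [hd]

theorem aeval_eq_zero_of_apply_eq_zero (hpush : aeval ![-(X 0) - X 1 - X 2, X 0, X 1] A = A)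
    (hdiv : X 0 + X 1 + X 2 ∣ A) {v : Fin 3 → S} {i : Fin 3} (hv : v i = 0) :
    aeval v A = 0 := by
  have hplane : ∀ a b c : S, a + b + c = 0 → aeval ![a, b, c] A = 0 := by
    intro a b c habc
    obtain ⟨B, rfl⟩ := hdiv
    simp [habc]
  obtain ⟨x, y, z, rfl⟩ : ∃ x y z : S, v = ![x, y, z] :=
    ⟨v 0, v 1, v 2, funext fun j => by fin_cases j <;> rfl⟩
  fin_cases i <;> simp only [Fin.zero_eta, Fin.mk_one, Fin.reduceFinMk, Matrix.cons_val] at hv <;>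
    subst hv
  · calc aeval ![0, y, z] A = aeval ![y, z, -y - z] A := aeval_push_eq hpush (by ring)
      _ = 0 := hplane _ _ _ (by ring)
  · calc aeval ![x, 0, z] A = aeval ![0, z, -x - z] A := aeval_push_eq hpush (by ring)
      _ = aeval ![z, -x - z, x] A := aeval_push_eq hpush (by ring)
      _ = 0 := hplane _ _ _ (by ring)
  · calc aeval ![x, y, 0] A = aeval ![y, 0, -x - y] A := aeval_push_eq hpush (by ring)
      _ = aeval ![0, -x - y, x] A := aeval_push_eq hpush (by ring)
      _ = aeval ![-x - y, x, y] A := aeval_push_eq hpush (by ring)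
      _ = 0 := hplane _ _ _ (by ring)

theorem X_dvd_of_push_invariant (hpush : aeval ![-(X 0) - X 1 - X 2, X 0, X 1] A = A)
    (hdiv : X 0 + X 1 + X 2 ∣ A) (i : Fin 3) : X i ∣ A :=
  X_dvd_iff_aeval_update_X_zero.mpr
    (aeval_eq_zero_of_apply_eq_zero hpush hdiv (Function.update_self i 0 X))

end Push

/-- Let A ∈ ℚ[u₁,u₂,u₃] be a push-invariant polynomial (a mould concentrated in depth 3),
i.e. A(u₁,u₂,u₃) = A(-u₁-u₂-u₃, u₁, u₂), divisible by u₁+u₂+u₃.  Then A is divisible by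
Δ₃ = u₁u₂u₃(u₁+u₂+u₃). -/
theorem push_invariant_div_sum_div_delta (A : MvPolynomial (Fin 3) ℚ)
    (hpush : aeval
        (![-(X 0) - X 1 - X 2, X 0, X 1] : Fin 3 → MvPolynomial (Fin 3) ℚ) A = A)
    (hdiv : ∃ B : MvPolynomial (Fin 3) ℚ, A = (X 0 + X 1 + X 2) * B) :
    ∃ C : MvPolynomial (Fin 3) ℚ, A = (X 0 * X 1 * X 2 * (X 0 + X 1 + X 2)) * C := by
  have hX := X_dvd_of_push_invariant hpush hdiv
  obtain ⟨B, rfl⟩ := hdiv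
  have hXB (i : Fin 3) : X i ∣ B :=
    (X_dvd_mul_iff.mp (hX i)).resolve_left (not_X_dvd_X_add_X_add_X i)
  obtain ⟨B₁, rfl⟩ := hXB 0
  obtain ⟨B₂, rfl⟩ : X 1 ∣ B₁ := by simpa [X_dvd_mul_iff] using hXB 1
  obtain ⟨C, rfl⟩ : X 2 ∣ B₂ := by simpa [X_dvd_mul_iff] using hXB 2
  exact ⟨C, by ring⟩
end
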